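/- arXiv:1312.4861 — 2 statements merged into one kernel-verified Lean document; each statement's English description precedes it below -/
import Mathlib

section
/- Let W ⊂ ℝ^d be a compact convex set. For every unit vector u ∈ S^{d-1}, the function r ↦ g_W(ru) is Lipschitz on [0, ∞) with Lipschitz constant V_{d-1}(W | u^⊥). -/
/-!
For `t ≥ 0`, convexity makes every line parallel to `u` meet `W \ (W + t • u)` in a set of
diameter at most `t`, and only lines through `W | u^⊥` meet `W`. In orthonormal coordinates
`(⟪x, u⟫, y)` adapted to `u`, Fubini gives `λ(W \ (W + t • u)) ≤ t · λ_{d-1}(Y)`, where `Y` is the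
set of `y`-coordinates of `W | u^⊥`; the map `x ↦ y` is 1-Lipschitz, so `λ_{d-1}(Y)` is at most
`V_{d-1}(W | u^⊥)`. Since `g_W(y) ≤ g_W(z) + λ(W \ (W + (z - y)))` and `W | u^⊥ = W | (-u)^⊥`, the
Lipschitz bound follows.
-/

open MeasureTheory Module
open scoped ENNReal NNReal RealInnerProductSpace

theorem Real.volume_diff_image_add_le {I : Set ℝ} (hI : I.OrdConnected) {t : ℝ} (ht : 0 ≤ t) :
    volume (I \ (· + t) '' I) ≤ ENNReal.ofReal t := by
  have hspread : ∀ a ∈ I \ (· + t) '' I, ∀ b ∈ I \ (· + t) '' I, b - a ≤ t := by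
    rintro a ⟨ha, -⟩ b ⟨hb, hbt⟩
    by_contra! h
    exact hbt ⟨b - t, hI.out ha hb ⟨by linarith, by linarith⟩, sub_add_cancel b t⟩
  refine (Real.volume_le_diam _).trans (Metric.ediam_le fun x hx y hy => ?_)
  rw [edist_dist, Real.dist_eq]
  exact ENNReal.ofReal_le_ofReal (abs_sub_le_iff.2 ⟨hspread y hy x hx, hspread x hx y hy⟩)

theorem MeasureTheory.Measure.prod_diff_image_prodMap_add_le {F : Type*} [MeasurableSpace F]
    (μ : Measure F) [SFinite μ] {A : Set (ℝ × F)} (hA : MeasurableSet A)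
    (hfiber : ∀ y, {r | (r, y) ∈ A}.OrdConnected) {t : ℝ} (ht : 0 ≤ t) :
    (volume.prod μ) (A \ Prod.map (· + t) id '' A) ≤ ENNReal.ofReal t * μ (Prod.snd '' A) := by
  have hshift : Prod.map (· + t) id '' A = Prod.map (· + -t) id ⁻¹' A := by
    ext ⟨r, y⟩; simp [Prod.exists, ← eq_sub_iff_add_eq, sub_eq_add_neg]
  have hfiber_le : ∀ y, volume ((fun r => (r, y)) ⁻¹' (A \ Prod.map (· + t) id '' A)) ≤
      (Prod.snd '' A).indicator (fun _ => ENNReal.ofReal t) y := by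
    intro y
    by_cases hy : y ∈ Prod.snd '' A
    · rw [Set.indicator_of_mem hy]
      convert Real.volume_diff_image_add_le (hfiber y) ht using 2
      ext r; simp [hshift, Set.image_add_right]
    · rw [Set.indicator_of_notMem hy, nonpos_iff_eq_zero, measure_eq_zero_iff_ae_notMem]
      exact Filter.Eventually.of_forall fun r hr => hy ⟨(r, y), hr.1, rfl⟩
  calc (volume.prod μ) (A \ Prod.map (· + t) id '' A)
      = ∫⁻ y, volume ((fun r => (r, y)) ⁻¹' (A \ Prod.map (· + t) id '' A)) ∂μ := by
        refine Measure.prod_apply_symm (hA.diff ?_)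
        rw [hshift]
        exact hA.preimage (by fun_prop)
    _ ≤ ∫⁻ y, (Prod.snd '' A).indicator (fun _ => ENNReal.ofReal t) y ∂μ :=
        lintegral_mono hfiber_le
    _ ≤ ENNReal.ofReal t * μ (Prod.snd '' A) := lintegral_indicator_const_le _ _

theorem measure_inter_image_add_le {G : Type*} [MeasurableSpace G] [AddCommGroup G]
    [MeasurableAdd G] (μ : Measure G) [μ.IsAddRightInvariant] (W : Set G) (y z : G) :
    μ (W ∩ (· + y) '' W) ≤ μ (W ∩ (· + z) '' W) + μ (W \ (· + (z - y)) '' W) := by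
  have hdiff : (· + y) '' W \ (· + z) '' W = (· + -y) ⁻¹' (W \ (· + (z - y)) '' W) := by
    ext x; simp [Set.image_add_right, sub_eq_add_neg, add_assoc, add_comm]
  calc μ (W ∩ (· + y) '' W) ≤ μ (W ∩ (· + z) '' W ∪ ((· + y) '' W \ (· + z) '' W)) := by
        refine measure_mono fun x ⟨hxW, hxy⟩ => ?_
        by_cases hxz : x ∈ (· + z) '' W
        · exact Or.inl ⟨hxW, hxz⟩
        · exact Or.inr ⟨hxy, hxz⟩
    _ ≤ μ (W ∩ (· + z) '' W) + μ (W \ (· + (z - y)) '' W) := by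
        rw [hdiff, ← measure_preimage_add_right μ (-y) (W \ _)]
        exact measure_union_le _ _

theorem hausdorffMeasure_fin_real (n : ℕ) : (μH[n] : Measure (Fin n → ℝ)) = volume := by
  simpa using hausdorffMeasure_pi_real (ι := Fin n)

section

variable {E : Type*} [NormedAddCommGroup E] [InnerProductSpace ℝ E]

theorem map_sub_inner_smul {F : Type*} [NormedAddCommGroup F] [NormedSpace ℝ F] {u : E}
    {L : E ≃L[ℝ] ℝ × F} (hLu : L u = (1, 0)) (hL : ∀ x, (L x).1 = ⟪x, u⟫) (x : E) :
    L (x - ⟪x, u⟫ • u) = (0, (L x).2) := by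
  ext <;> simp [hLu, hL]

variable [FiniteDimensional ℝ E] [MeasurableSpace E] [BorelSpace E]

theorem exists_measurePreserving_coords {n : ℕ} (hn : finrank ℝ E = n + 1) {u : E}
    (hu : ‖u‖ = 1) :
    ∃ L : E ≃L[ℝ] ℝ × (Fin n → ℝ), MeasurePreserving L ∧ L u = (1, 0) ∧
      (∀ x, (L x).1 = ⟪x, u⟫) ∧ LipschitzWith 1 fun x => (L x).2 := by
  have hu' : Orthonormal ℝ (({0} : Set (Fin (n + 1))).domRestrict fun _ => u) := by
    rw [orthonormal_iff_ite]
    rintro ⟨i, rfl⟩ ⟨j, rfl⟩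
    simp [hu]
  obtain ⟨b, hb⟩ := hu'.exists_orthonormalBasis_extension_of_card_eq (by simpa using hn)
  have hb0 : b 0 = u := hb 0 rfl
  let L : E ≃L[ℝ] ℝ × (Fin n → ℝ) := b.repr.toContinuousLinearEquiv.trans
    ((PiLp.continuousLinearEquiv 2 ℝ _).trans (Fin.consEquivL ℝ fun _ => ℝ).symm)
  have hL : ∀ x, L x = (b.repr x 0, fun j => b.repr x j.succ) := fun x => rfl
  refine ⟨L, ?_, ?_, fun x => ?_, ?_⟩
  · have hLfun :
        ⇑L = (MeasurableEquiv.piFinSuccAbove (fun _ => ℝ) 0 ∘ WithLp.ofLp) ∘ b.repr := by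
      funext x
      rw [hL]
      ext j <;> simp [Fin.tail]
    rw [hLfun]
    exact ((volume_preserving_piFinSuccAbove (fun _ : Fin (n + 1) => ℝ) 0).comp
      (PiLp.volume_preserving_ofLp _)).comp b.measurePreserving_repr
  · rw [hL, ← hb0]
    ext j <;> simp [b.repr_self]
  · rw [hL, b.repr_apply_apply, hb0, real_inner_comm]
  · refine LipschitzWith.of_dist_le_mul fun x y => ?_
    rw [NNReal.coe_one, one_mul, dist_eq_norm, dist_eq_norm, ← Prod.snd_sub, ← map_sub]
    refine (pi_norm_le_iff_of_nonneg (norm_nonneg _)).2 fun j => ?_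
    rw [← b.repr.norm_map]
    exact PiLp.norm_apply_le (b.repr (x - y)) j.succ

theorem volume_diff_image_add_smul_le {n : ℕ} (hn : finrank ℝ E = n + 1) {W : Set E}
    (hWm : MeasurableSet W) (hW : Convex ℝ W) {u : E} (hu : ‖u‖ = 1) {t : ℝ} (ht : 0 ≤ t) :
    volume (W \ (· + t • u) '' W) ≤
      ENNReal.ofReal t * μH[n] ((fun x => x - ⟪x, u⟫ • u) '' W) := by
  obtain ⟨L, hLm, hLu, hL, hLsnd⟩ := exists_measurePreserving_coords hn hu
  have hmeas : ∀ S, MeasurableSet S → MeasurableSet (L '' S) := fun S hS => by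
    rw [L.image_eq_preimage_symm]
    exact L.symm.continuous.measurable hS
  have hvol : ∀ S, MeasurableSet S → volume (L '' S) = volume S := fun S hS => by
    rw [← hLm.measure_preimage (hmeas S hS).nullMeasurableSet, Set.preimage_image_eq S L.injective]
  have hshift : L '' ((· + t • u) '' W) = Prod.map (· + t) id '' (L '' W) := by
    simp only [Set.image_image]
    refine Set.image_congr fun x _ => ?_
    ext <;> simp [hLu]
  have hfiber : ∀ y, {r | (r, y) ∈ L '' W}.OrdConnected := fun y => by
    refine Convex.ordConnected ?_
    have : {r | (r, y) ∈ L '' W} = AffineMap.lineMap ((0 : ℝ), y) (1, y) ⁻¹' (L '' W) := by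
      ext r; simp [AffineMap.lineMap_apply_module, ← add_smul]
    rw [this]
    exact (hW.linear_image L.toLinearMap).affine_preimage _
  have hproj :
      Prod.snd '' (L '' W) = (fun x => (L x).2) '' ((fun x => x - ⟪x, u⟫ • u) '' W) := by
    simp only [Set.image_image, map_sub_inner_smul hLu hL]
  calc volume (W \ (· + t • u) '' W) = volume (L '' (W \ (· + t • u) '' W)) := by
        refine (hvol _ (hWm.diff ?_)).symm
        rw [Set.image_add_right]
        exact measurable_add_const _ hWm
    _ = (volume.prod volume) (L '' W \ Prod.map (· + t) id '' (L '' W)) := by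
        rw [Set.image_sdiff L.injective, hshift, Measure.volume_eq_prod]
    _ ≤ ENNReal.ofReal t * volume (Prod.snd '' (L '' W)) :=
        Measure.prod_diff_image_prodMap_add_le volume (hmeas W hWm) hfiber ht
    _ ≤ ENNReal.ofReal t * μH[n] ((fun x => x - ⟪x, u⟫ • u) '' W) := by
        gcongr
        rw [← hausdorffMeasure_fin_real, hproj]
        simpa using hLsnd.hausdorffMeasure_image_le (Nat.cast_nonneg n) _

theorem hausdorffMeasure_image_sub_inner_smul_ne_top {n : ℕ} (hn : finrank ℝ E = n + 1)
    {W : Set E} (hW : Bornology.IsBounded W) {u : E} (hu : ‖u‖ = 1) :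
    μH[n] ((fun x => x - ⟪x, u⟫ • u) '' W) ≠ ∞ := by
  obtain ⟨L, -, hLu, hL, hLsnd⟩ := exists_measurePreserving_coords hn hu
  let ι := L.symm.toContinuousLinearMap.comp (ContinuousLinearMap.inr ℝ ℝ (Fin n → ℝ))
  have hfactor : (fun x => x - ⟪x, u⟫ • u) '' W = ι '' ((fun x => (L x).2) '' W) := by
    rw [Set.image_image]
    refine Set.image_congr fun x _ => ?_
    simp [ι, L.eq_symm_apply, map_sub_inner_smul hLu hL]
  rw [hfactor]
  refine ne_top_of_le_ne_top ?_ (ι.lipschitz.hausdorffMeasure_image_le (Nat.cast_nonneg n) _)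
  rw [hausdorffMeasure_fin_real]
  exact ENNReal.mul_ne_top (by simp) (hLsnd.isBounded_image hW).measure_lt_top.ne

theorem volume_diff_image_add_smul_le_abs {n : ℕ} (hn : finrank ℝ E = n + 1) {W : Set E}
    (hWm : MeasurableSet W) (hW : Convex ℝ W) {u : E} (hu : ‖u‖ = 1) (t : ℝ) :
    volume (W \ (· + t • u) '' W) ≤
      ENNReal.ofReal |t| * μH[n] ((fun x => x - ⟪x, u⟫ • u) '' W) := by
  rcases le_total 0 t with ht | ht
  · rw [abs_of_nonneg ht]
    exact volume_diff_image_add_smul_le hn hWm hW hu ht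
  · have hproj : (fun x => x - ⟪x, -u⟫ • -u) = fun x => x - ⟪x, u⟫ • u := by
      simp [inner_neg_right]
    rw [abs_of_nonpos ht, ← hproj, ← neg_smul_neg]
    exact volume_diff_image_add_smul_le hn hWm hW (by rwa [norm_neg]) (neg_nonneg.2 ht)

theorem lipschitzWith_covariogram_smul {n : ℕ} (hn : finrank ℝ E = n + 1) {W : Set E}
    (hWc : IsCompact W) (hW : Convex ℝ W) {u : E} (hu : ‖u‖ = 1) :
    LipschitzWith (μH[n] ((fun x => x - ⟪x, u⟫ • u) '' W)).toNNReal
      fun r : ℝ => (volume (W ∩ (· + r • u) '' W)).toReal := by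
  have hfin := hausdorffMeasure_image_sub_inner_smul_ne_top hn hWc.isBounded hu
  refine LipschitzWith.of_le_add_mul _ fun r s => ?_
  have hle : volume (W ∩ (· + r • u) '' W) ≤ volume (W ∩ (· + s • u) '' W) +
      ENNReal.ofReal (dist r s) * μH[n] ((fun x => x - ⟪x, u⟫ • u) '' W) :=
    calc volume (W ∩ (· + r • u) '' W)
        ≤ volume (W ∩ (· + s • u) '' W) + volume (W \ (· + (s • u - r • u)) '' W) :=
          measure_inter_image_add_le volume W (r • u) (s • u)
      _ ≤ _ := by
          rw [← sub_smul, Real.dist_eq, abs_sub_comm]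
          gcongr
          exact volume_diff_image_add_smul_le_abs hn hWc.measurableSet hW hu (s - r)
  have hfin' : volume (W ∩ (· + s • u) '' W) ≠ ∞ :=
    ((measure_mono Set.inter_subset_left).trans_lt hWc.measure_lt_top).ne
  have := ENNReal.toReal_mono (by finiteness) hle
  rwa [ENNReal.toReal_add hfin' (by finiteness), ENNReal.toReal_mul,
    ENNReal.toReal_ofReal dist_nonneg, mul_comm, ← ENNReal.coe_toNNReal_eq_toReal] at this

end

theorem stmt4 (d : ℕ) (hd : 1 ≤ d) (W : Set (EuclideanSpace ℝ (Fin d)))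
    (hWc : IsCompact W) (hWconv : Convex ℝ W)
    (u : EuclideanSpace ℝ (Fin d)) (hu : ‖u‖ = 1)
    (gW : EuclideanSpace ℝ (Fin d) → ℝ)
    (hgW : ∀ y, gW y = (volume (W ∩ ((· + y) '' W))).toReal)
    (V : ℝ)
    (hV : V = (μH[(d : ℝ) - 1]
        ((fun x => x - (inner ℝ x u : ℝ) • u) '' W)).toReal) :
    LipschitzOnWith (Real.toNNReal V) (fun r : ℝ => gW (r • u)) (Set.Ici 0) := by
  obtain ⟨n, rfl⟩ : ∃ n, d = n + 1 := ⟨d - 1, by omega⟩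
  have hdim : ((n + 1 : ℕ) : ℝ) - 1 = n := by push_cast; ring
  have hK : Real.toNNReal V = (μH[n] ((fun x => x - ⟪x, u⟫ • u) '' W)).toNNReal := by
    rw [hV, hdim, ← ENNReal.coe_toNNReal_eq_toReal, Real.toNNReal_coe]
  simp only [hK, hgW]
  exact (lipschitzWith_covariogram_smul (by simp) hWc hWconv hu).lipschitzOnWith
end

section
/- For any (a₁,...,a_m) ≠ 0 and distinct exponents α₁, ..., α_m > -d/2, the function u ↦ Σ_{i,j=1}^m a_i a_j u^{α_i+α_j+d}/(α_i+α_j+d) is strictly positive for all sufficiently small u > 0. -/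
/-! Factor out `u ^ p₀`, where `p₀` is the smallest exponent carrying a nonzero coefficient: what
remains tends to the sum of the leading coefficients as `u → 0⁺`. For the quadratic form, the
leading exponent is `2 α i₀ + d` with `α i₀` minimal among the indices with `a i ≠ 0`; by
injectivity of `α` it is attained only at `(i₀, i₀)`, whose coefficient `a i₀ ^ 2 / (2 α i₀ + d)`
is positive. -/

open Filter Topology

lemma tendsto_rpow_nhdsGT_zero_of_pos {q : ℝ} (hq : 0 < q) :
    Tendsto (fun u : ℝ => u ^ q) (𝓝[>] 0) (𝓝 0) := by
  have h := (Real.continuousAt_rpow_const 0 q (Or.inr hq.le)).tendsto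
  rw [Real.zero_rpow hq.ne'] at h
  exact tendsto_nhdsWithin_of_tendsto_nhds h

lemma tendsto_sum_mul_rpow_sub_lowest {ι : Type*} (s : Finset ι) (c p : ι → ℝ) {p₀ : ℝ}
    (hp : ∀ k ∈ s, c k ≠ 0 → p₀ ≤ p k) :
    Tendsto (fun u : ℝ => ∑ k ∈ s, c k * u ^ (p k - p₀)) (𝓝[>] 0)
      (𝓝 (∑ k ∈ s with p k = p₀, c k)) := by
  rw [Finset.sum_filter]
  refine tendsto_finsetSum s fun k hk => ?_
  by_cases hlead : p k = p₀
  · simp only [hlead, sub_self, Real.rpow_zero, mul_one, if_true]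
    exact tendsto_const_nhds
  rw [if_neg hlead]
  by_cases hc : c k = 0
  · simp only [hc, zero_mul]
    exact tendsto_const_nhds
  have hq : 0 < p k - p₀ := sub_pos.mpr (lt_of_le_of_ne (hp k hk hc) (Ne.symm hlead))
  simpa using (tendsto_rpow_nhdsGT_zero_of_pos hq).const_mul (c k)

lemma eventually_pos_sum_mul_rpow {ι : Type*} (s : Finset ι) (c p : ι → ℝ) {p₀ : ℝ}
    (hp : ∀ k ∈ s, c k ≠ 0 → p₀ ≤ p k) (hlead : 0 < ∑ k ∈ s with p k = p₀, c k) :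
    ∀ᶠ u in 𝓝[>] 0, 0 < ∑ k ∈ s, c k * u ^ p k := by
  filter_upwards [(tendsto_sum_mul_rpow_sub_lowest s c p hp).eventually (eventually_gt_nhds hlead),
    self_mem_nhdsWithin] with u hrest (hu : 0 < u)
  have hfactor : ∑ k ∈ s, c k * u ^ p k = u ^ p₀ * ∑ k ∈ s, c k * u ^ (p k - p₀) := by
    rw [Finset.mul_sum]
    refine Finset.sum_congr rfl fun k _ => ?_
    rw [Real.rpow_sub hu]
    field_simp
  rw [hfactor]
  exact mul_pos (Real.rpow_pos_of_pos hu p₀) hrest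

lemma eventually_pos_sum_mul_mul_rpow_div {ι : Type*} [Fintype ι] {α : ι → ℝ} {δ : ℝ}
    (hα : ∀ i, -δ / 2 < α i) (hinj : Function.Injective α) {a : ι → ℝ} (ha : a ≠ 0) :
    ∀ᶠ u in 𝓝[>] 0, 0 < ∑ i, ∑ j, a i * a j * u ^ (α i + α j + δ) / (α i + α j + δ) := by
  have hsupp : (Finset.univ.filter fun i => a i ≠ 0).Nonempty := by
    obtain ⟨i, hi⟩ := Function.ne_iff.mp ha
    exact ⟨i, by simpa using hi⟩
  obtain ⟨i₀, hi₀, hi₀_min⟩ := Finset.exists_min_image _ α hsupp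
  have ha₀ : a i₀ ≠ 0 := (Finset.mem_filter.mp hi₀).2
  set p : ι × ι → ℝ := fun k => α k.1 + α k.2 + δ
  set c : ι × ι → ℝ := fun k => a k.1 * a k.2 / p k
  have hp_pos : ∀ k, 0 < p k := fun k => by linarith [hα k.1, hα k.2]
  have hmin : ∀ k, c k ≠ 0 → α i₀ ≤ α k.1 ∧ α i₀ ≤ α k.2 := fun k hk =>
    ⟨hi₀_min _ (by simp_all [c]), hi₀_min _ (by simp_all [c])⟩
  have hp_le : ∀ k ∈ Finset.univ, c k ≠ 0 → p (i₀, i₀) ≤ p k := fun k _ hk => by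
    simp only [p]; linarith [hmin k hk]
  have hlead : ∑ k with p k = p (i₀, i₀), c k = c (i₀, i₀) := by
    refine Finset.sum_eq_single_of_mem _ (by simp) fun k hk hne => ?_
    by_contra hk0
    obtain ⟨h1, h2⟩ := hmin k hk0
    have hk : α k.1 + α k.2 = α i₀ + α i₀ := by simpa [p] using (Finset.mem_filter.mp hk).2
    exact hne (Prod.ext (hinj (by linarith)) (hinj (by linarith)))
  have hc₀ : 0 < c (i₀, i₀) := div_pos (mul_self_pos.mpr ha₀) (hp_pos _)
  filter_upwards [eventually_pos_sum_mul_rpow Finset.univ c p hp_le (hlead ▸ hc₀)] with u hpos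
  rw [Fintype.sum_prod_type] at hpos
  convert hpos using 1
  simp only [c, p, div_mul_eq_mul_div]

theorem stmt12_general (d : ℕ) (m : ℕ) (α : Fin m → ℝ)
    (hα : ∀ i, -(d : ℝ) / 2 < α i) (hinj : Function.Injective α)
    (a : Fin m → ℝ) (ha : a ≠ 0) :
    ∃ ε > 0, ∀ u : ℝ, 0 < u → u < ε →
      0 < ∑ i, ∑ j, a i * a j * u ^ (α i + α j + d) / (α i + α j + d) := by
  obtain ⟨ε, hε, hsub⟩ := mem_nhdsGT_iff_exists_Ioo_subset.mp
    (eventually_pos_sum_mul_mul_rpow_div (δ := d) hα hinj ha)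
  exact ⟨ε, hε, fun u hu huε => hsub ⟨hu, huε⟩⟩

theorem stmt12 (d : ℕ) (hd : 1 ≤ d) (m : ℕ) (α : Fin m → ℝ)
    (hα : ∀ i, -(d : ℝ) / 2 < α i) (hinj : Function.Injective α)
    (a : Fin m → ℝ) (ha : a ≠ 0) :
    ∃ ε > 0, ∀ u : ℝ, 0 < u → u < ε →
      0 < ∑ i, ∑ j, a i * a j * u ^ (α i + α j + d) / (α i + α j + d) :=
  stmt12_general d m α hα hinj a ha
end
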